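/- Let φ : ℝ → ℝ be continuously differentiable and strictly increasing, let T ∈ ℝ, and take a = −1, l = 1 (so [a, a+2l] = [−1, 1]). Let k ≥ 1 and for each p ∈ {1, …, k} let A_p < B_p satisfy φ^[p](A_p) = T and φ^[p](B_p) = T + 2. Let P_n denote the n-th Legendre polynomial. Then for every choice of indices p₁, p₂, p₃ ∈ {1, …, k}, the third-generation functions P_n^{p₁,p₂,p₃}(t) := P_n(u_{p₁}(u_{p₂}(u_{p₃}(t)))) · w_{p₁}(u_{p₂}(u_{p₃}(t))) · w_{p₂}(u_{p₃}(t)) · w_{p₃}(t) form an orthogonal system in L²([−1, 1]): ∫_{−1}^{1} P_m^{p₁,p₂,p₃}(t) P_n^{p₁,p₂,p₃}(t) dt = 0 for all m ≠ n. -/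

import Mathlib

open MeasureTheory Set

/-- The affine map `ρ_p` sending `[a, a+2l]` onto `[A, B]`. -/
noncomputable def rhoMap (A B a l : ℝ) (t : ℝ) : ℝ := (B - A) / (2 * l) * (t - a) + A

/-- The map `u_p(t) = φ^[p](ρ_p(t)) − T + a`. -/
noncomputable def uMap (φ : ℝ → ℝ) (p : ℕ) (A B a l T : ℝ) (t : ℝ) : ℝ :=
  φ^[p] (rhoMap A B a l t) - T + a

/-- The weight `w_p(t) = ∏_{r=0}^{p−1} √(φ′(φ^[r](ρ_p(t))))`. -/
noncomputable def wMap (φ : ℝ → ℝ) (p : ℕ) (A B a l : ℝ) (t : ℝ) : ℝ :=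
  ∏ r ∈ Finset.range p, Real.sqrt (deriv φ (φ^[r] (rhoMap A B a l t)))

/-- The `n`-th Legendre polynomial, by Rodrigues' formula
`P_n(t) = (1/(2ⁿ n!)) dⁿ/dtⁿ (t² − 1)ⁿ`. -/
noncomputable def legendreP (n : ℕ) (t : ℝ) : ℝ :=
  (1 / (2 ^ n * (n.factorial : ℝ))) * iteratedDeriv n (fun x : ℝ => (x ^ 2 - 1) ^ n) t

/-!
The Legendre polynomials are orthogonal on `[-1, 1]`: integrating `n` times by parts moves
the `n` derivatives of Rodrigues' formula onto a polynomial of lower degree, and the boundary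
terms vanish because `(t² − 1)ⁿ` has zeros of order `n` at `±1`.
Each map `u_p` sends `[a, a + 2l]` onto itself with derivative
`u_p′ = ((B_p − A_p)/(2l)) · w_p²`, so substituting `s = u_p(t)` shows that
`f ↦ (f ∘ u_p) · w_p` preserves orthogonality on `[a, a + 2l]`. The third-generation system
arises from the Legendre system by three such transformations.
-/

open Polynomial

noncomputable def rodrigues (n : ℕ) : ℝ[X] := derivative^[n] ((X ^ 2 - 1) ^ n)

theorem Polynomial.iteratedDeriv_eval {𝕜 : Type*} [NontriviallyNormedField 𝕜] (p : 𝕜[X])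
    (n : ℕ) : iteratedDeriv n (fun x => p.eval x) = fun x => (derivative^[n] p).eval x := by
  induction n with
  | zero => simp
  | succ n ih =>
    rw [iteratedDeriv_succ, ih, Function.iterate_succ_apply']
    funext x
    exact Polynomial.deriv _

theorem legendreP_eq_eval_rodrigues (n : ℕ) (t : ℝ) :
    legendreP n t = (2 ^ n * (n.factorial : ℝ))⁻¹ * (rodrigues n).eval t := by
  have h : (fun x : ℝ => (x ^ 2 - 1) ^ n) = fun x => ((X ^ 2 - 1 : ℝ[X]) ^ n).eval x := by
    simp
  rw [legendreP, h, Polynomial.iteratedDeriv_eval, one_div, rodrigues]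

@[fun_prop]
theorem continuous_legendreP (n : ℕ) : Continuous (legendreP n) := by
  simp_rw [funext (legendreP_eq_eval_rodrigues n)]
  fun_prop

theorem eval_iterate_derivative_sq_sub_one_pow {j n : ℕ} (hj : j < n) {x : ℝ} (hx : x ^ 2 = 1) :
    (derivative^[j] ((X ^ 2 - 1 : ℝ[X]) ^ n)).eval x = 0 := by
  obtain ⟨q, hq⟩ := (dvd_pow_self _ (Nat.sub_ne_zero_of_lt hj)).trans
    (pow_sub_dvd_iterate_derivative_pow (X ^ 2 - 1 : ℝ[X]) n j)
  simp [hq, hx]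

theorem integral_eval_mul_eval_iterate_derivative {a b : ℝ} (f g : ℝ[X]) (n : ℕ)
    (hf : ∀ j < n, (derivative^[j] f).eval a = 0 ∧ (derivative^[j] f).eval b = 0) :
    ∫ t in a..b, g.eval t * (derivative^[n] f).eval t
      = (-1) ^ n * ∫ t in a..b, (derivative^[n] g).eval t * f.eval t := by
  induction n generalizing g with
  | zero => simp
  | succ n ih =>
    have hparts := intervalIntegral.integral_mul_deriv_eq_deriv_mul
      (fun x _ => g.hasDerivAt x)
      (fun x _ => by
        simpa only [Function.iterate_succ_apply'] using (derivative^[n] f).hasDerivAt x)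
      ((derivative g).continuous.intervalIntegrable a b)
      ((derivative^[n + 1] f).continuous.intervalIntegrable a b)
    obtain ⟨hfa, hfb⟩ := hf n n.lt_succ_self
    rw [hparts, hfa, hfb, ih (derivative g) fun j hj => hf j (by omega),
      ← Function.iterate_succ_apply]
    ring

theorem integral_eval_mul_rodrigues_eq_zero {g : ℝ[X]} {n : ℕ} (hg : g.natDegree < n) :
    ∫ t in (-1 : ℝ)..1, g.eval t * (rodrigues n).eval t = 0 := by
  rw [rodrigues, integral_eval_mul_eval_iterate_derivative _ _ _ fun j hj =>
      ⟨eval_iterate_derivative_sq_sub_one_pow hj (by norm_num),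
        eval_iterate_derivative_sq_sub_one_pow hj (by norm_num)⟩,
    iterate_derivative_eq_zero hg]
  simp

theorem natDegree_rodrigues_le (n : ℕ) : (rodrigues n).natDegree ≤ n := by
  have h : ((X ^ 2 - 1 : ℝ[X]) ^ n).natDegree ≤ 2 * n := by
    rw [← C_1, mul_comm]
    exact natDegree_pow_le_of_le n natDegree_X_pow_sub_C.le
  exact (natDegree_iterate_derivative _ n).trans (by omega)

theorem integral_legendreP_mul_legendreP_of_lt {m n : ℕ} (h : m < n) :
    ∫ t in (-1 : ℝ)..1, legendreP m t * legendreP n t = 0 := by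
  simp_rw [legendreP_eq_eval_rodrigues, mul_mul_mul_comm _ ((rodrigues m).eval _)]
  rw [intervalIntegral.integral_const_mul,
    integral_eval_mul_rodrigues_eq_zero ((natDegree_rodrigues_le m).trans_lt h), mul_zero]

theorem integral_legendreP_mul_legendreP {m n : ℕ} (h : m ≠ n) :
    ∫ t in (-1 : ℝ)..1, legendreP m t * legendreP n t = 0 := by
  rcases h.lt_or_gt with h | h
  · exact integral_legendreP_mul_legendreP_of_lt h
  · simpa only [mul_comm] using integral_legendreP_mul_legendreP_of_lt h

theorem hasDerivAt_iterate_of_differentiable {𝕜 : Type*} [NontriviallyNormedField 𝕜]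
    {f : 𝕜 → 𝕜} (hf : Differentiable 𝕜 f) (p : ℕ) (x : 𝕜) :
    HasDerivAt f^[p] (∏ r ∈ Finset.range p, deriv f (f^[r] x)) x := by
  induction p with
  | zero => simpa using hasDerivAt_id x
  | succ p ih =>
    rw [Function.iterate_succ', Finset.prod_range_succ, mul_comm]
    exact (hf _).hasDerivAt.comp x ih

section JacobLadder

variable {φ : ℝ → ℝ} {p : ℕ} {A B a l T : ℝ}

@[fun_prop]
theorem continuous_rhoMap : Continuous (rhoMap A B a l) := by
  unfold rhoMap
  fun_prop

@[fun_prop]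
theorem continuous_uMap (hφ : Continuous φ) : Continuous (uMap φ p A B a l T) := by
  unfold uMap
  fun_prop

@[fun_prop]
theorem continuous_wMap (hφ : ContDiff ℝ 1 φ) : Continuous (wMap φ p A B a l) := by
  have hφ' := hφ.continuous_deriv le_rfl
  have hφc := hφ.continuous
  unfold wMap
  fun_prop

theorem wMap_sq (hmono : Monotone φ) (t : ℝ) :
    wMap φ p A B a l t ^ 2 = ∏ r ∈ Finset.range p, deriv φ (φ^[r] (rhoMap A B a l t)) := by
  rw [wMap, ← Finset.prod_pow]
  exact Finset.prod_congr rfl fun r _ => Real.sq_sqrt hmono.deriv_nonneg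

theorem hasDerivAt_uMap (hφ : Differentiable ℝ φ) (hmono : Monotone φ) (t : ℝ) :
    HasDerivAt (uMap φ p A B a l T) ((B - A) / (2 * l) * wMap φ p A B a l t ^ 2) t := by
  have hρ : HasDerivAt (rhoMap A B a l) ((B - A) / (2 * l)) t := by
    unfold rhoMap
    simpa using (((hasDerivAt_id t).sub_const a).const_mul ((B - A) / (2 * l))).add_const A
  rw [wMap_sq hmono, mul_comm]
  exact (((hasDerivAt_iterate_of_differentiable hφ p _).comp t hρ).sub_const T).add_const a

theorem uMap_left (hA : φ^[p] A = T) : uMap φ p A B a l T a = a := by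
  simp [uMap, rhoMap, hA]

theorem uMap_right (hl : l ≠ 0) (hB : φ^[p] B = T + 2 * l) :
    uMap φ p A B a l T (a + 2 * l) = a + 2 * l := by
  have hρ : rhoMap A B a l (a + 2 * l) = B := by
    rw [rhoMap, add_sub_cancel_left, div_mul_cancel₀ _ (by positivity)]
    ring
  rw [uMap, hρ, hB]
  ring

theorem integral_comp_uMap_mul_wMap_sq (hφ : ContDiff ℝ 1 φ) (hmono : Monotone φ)
    (hA : φ^[p] A = T) (hB : φ^[p] B = T + 2 * l) {g : ℝ → ℝ} (hg : Continuous g) :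
    (B - A) / (2 * l) * ∫ t in a..a + 2 * l, g (uMap φ p A B a l T t) * wMap φ p A B a l t ^ 2
      = ∫ s in a..a + 2 * l, g s := by
  rcases eq_or_ne l 0 with rfl | hl
  · simp
  have hsubst := intervalIntegral.integral_comp_mul_deriv (a := a) (b := a + 2 * l)
    (f := uMap φ p A B a l T) (g := g)
    (fun t _ => hasDerivAt_uMap (hφ.differentiable one_ne_zero) hmono t)
    (by fun_prop) hg
  rw [uMap_left hA, uMap_right hl hB] at hsubst
  rw [← hsubst, ← intervalIntegral.integral_const_mul]
  congr 1 with t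
  simp only [Function.comp_apply]
  ring

theorem integral_comp_uMap_mul_wMap_eq_zero (hφ : ContDiff ℝ 1 φ) (hmono : Monotone φ)
    (hA : φ^[p] A = T) (hB : φ^[p] B = T + 2 * l) {f g : ℝ → ℝ} (hf : Continuous f)
    (hg : Continuous g) (hfg : ∫ t in a..a + 2 * l, f t * g t = 0) :
    ∫ t in a..a + 2 * l,
      f (uMap φ p A B a l T t) * wMap φ p A B a l t *
        (g (uMap φ p A B a l T t) * wMap φ p A B a l t) = 0 := by
  rcases eq_or_ne l 0 with rfl | hl
  · simp
  have hBA : B - A ≠ 0 := by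
    rintro h
    rw [sub_eq_zero.1 h, hA] at hB
    exact hl (by linarith)
  have h := integral_comp_uMap_mul_wMap_sq (a := a) hφ hmono hA hB
    (g := fun s => f s * g s) (hf.mul hg)
  rw [hfg, mul_eq_zero, or_iff_right (by positivity)] at h
  simpa only [mul_mul_mul_comm _ (wMap φ p A B a l _), ← sq] using h

end JacobLadder

theorem legendre_third_generation_orthogonal_general
    (φ : ℝ → ℝ) (hφ : ContDiff ℝ 1 φ) (hmono : StrictMono φ)
    (T : ℝ) (k : ℕ)
    (A B : ℕ → ℝ)
    (hAB : ∀ p, 1 ≤ p → p ≤ k →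
      A p < B p ∧ φ^[p] (A p) = T ∧ φ^[p] (B p) = T + 2)
    (p₁ p₂ p₃ : ℕ)
    (hp₁ : 1 ≤ p₁ ∧ p₁ ≤ k) (hp₂ : 1 ≤ p₂ ∧ p₂ ≤ k) (hp₃ : 1 ≤ p₃ ∧ p₃ ≤ k) :
    ∀ m n : ℕ, m ≠ n →
      ∫ t in (-1 : ℝ)..1,
        (legendreP m
            (uMap φ p₁ (A p₁) (B p₁) (-1) 1 T
              (uMap φ p₂ (A p₂) (B p₂) (-1) 1 T (uMap φ p₃ (A p₃) (B p₃) (-1) 1 T t))) *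
          wMap φ p₁ (A p₁) (B p₁) (-1) 1
            (uMap φ p₂ (A p₂) (B p₂) (-1) 1 T (uMap φ p₃ (A p₃) (B p₃) (-1) 1 T t)) *
          wMap φ p₂ (A p₂) (B p₂) (-1) 1 (uMap φ p₃ (A p₃) (B p₃) (-1) 1 T t) *
          wMap φ p₃ (A p₃) (B p₃) (-1) 1 t) *
        (legendreP n
            (uMap φ p₁ (A p₁) (B p₁) (-1) 1 T
              (uMap φ p₂ (A p₂) (B p₂) (-1) 1 T (uMap φ p₃ (A p₃) (B p₃) (-1) 1 T t))) *
          wMap φ p₁ (A p₁) (B p₁) (-1) 1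
            (uMap φ p₂ (A p₂) (B p₂) (-1) 1 T (uMap φ p₃ (A p₃) (B p₃) (-1) 1 T t)) *
          wMap φ p₂ (A p₂) (B p₂) (-1) 1 (uMap φ p₃ (A p₃) (B p₃) (-1) 1 T t) *
          wMap φ p₃ (A p₃) (B p₃) (-1) 1 t) = 0 := by
  intro m n hmn
  have step : ∀ p, 1 ≤ p ∧ p ≤ k → ∀ {f g : ℝ → ℝ}, Continuous f → Continuous g →
      ∫ t in (-1 : ℝ)..1, f t * g t = 0 →
      ∫ t in (-1 : ℝ)..1,
        f (uMap φ p (A p) (B p) (-1) 1 T t) * wMap φ p (A p) (B p) (-1) 1 t *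
          (g (uMap φ p (A p) (B p) (-1) 1 T t) * wMap φ p (A p) (B p) (-1) 1 t) = 0 := by
    rintro p ⟨hp, hpk⟩ f g hf hg hfg
    obtain ⟨-, hA, hB⟩ := hAB p hp hpk
    have hend : (-1 : ℝ) + 2 * 1 = 1 := by norm_num
    have h := integral_comp_uMap_mul_wMap_eq_zero (a := -1) (l := 1) hφ hmono.monotone hA
      (by rw [hB, mul_one]) hf hg (by rwa [hend])
    rwa [hend] at h
  have hφc := hφ.continuous
  have h₁ := step p₁ hp₁ (continuous_legendreP m) (continuous_legendreP n)
    (integral_legendreP_mul_legendreP hmn)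
  have h₂ := step p₂ hp₂ (by fun_prop) (by fun_prop) h₁
  exact step p₃ hp₃ (by fun_prop) (by fun_prop) h₂

/-- With `a = −1`, `l = 1`, for every choice of `p₁, p₂, p₃ ∈ {1,…,k}`
the third-generation functions
`P_n^{p₁,p₂,p₃}(t) = P_n(u_{p₁}(u_{p₂}(u_{p₃}(t)))) · w_{p₁}(u_{p₂}(u_{p₃}(t))) ·
w_{p₂}(u_{p₃}(t)) · w_{p₃}(t)` form an orthogonal system in `L²([−1,1])`. -/
theorem legendre_third_generation_orthogonal
    (φ : ℝ → ℝ) (hφ : ContDiff ℝ 1 φ) (hmono : StrictMono φ)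
    (T : ℝ) (k : ℕ) (hk : 1 ≤ k)
    (A B : ℕ → ℝ)
    (hAB : ∀ p, 1 ≤ p → p ≤ k →
      A p < B p ∧ φ^[p] (A p) = T ∧ φ^[p] (B p) = T + 2)
    (p₁ p₂ p₃ : ℕ)
    (hp₁ : 1 ≤ p₁ ∧ p₁ ≤ k) (hp₂ : 1 ≤ p₂ ∧ p₂ ≤ k) (hp₃ : 1 ≤ p₃ ∧ p₃ ≤ k) :
    ∀ m n : ℕ, m ≠ n →
      ∫ t in (-1 : ℝ)..1,
        (legendreP m
            (uMap φ p₁ (A p₁) (B p₁) (-1) 1 T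
              (uMap φ p₂ (A p₂) (B p₂) (-1) 1 T (uMap φ p₃ (A p₃) (B p₃) (-1) 1 T t))) *
          wMap φ p₁ (A p₁) (B p₁) (-1) 1
            (uMap φ p₂ (A p₂) (B p₂) (-1) 1 T (uMap φ p₃ (A p₃) (B p₃) (-1) 1 T t)) *
          wMap φ p₂ (A p₂) (B p₂) (-1) 1 (uMap φ p₃ (A p₃) (B p₃) (-1) 1 T t) *
          wMap φ p₃ (A p₃) (B p₃) (-1) 1 t) *
        (legendreP n
            (uMap φ p₁ (A p₁) (B p₁) (-1) 1 T
              (uMap φ p₂ (A p₂) (B p₂) (-1) 1 T (uMap φ p₃ (A p₃) (B p₃) (-1) 1 T t))) *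
          wMap φ p₁ (A p₁) (B p₁) (-1) 1
            (uMap φ p₂ (A p₂) (B p₂) (-1) 1 T (uMap φ p₃ (A p₃) (B p₃) (-1) 1 T t)) *
          wMap φ p₂ (A p₂) (B p₂) (-1) 1 (uMap φ p₃ (A p₃) (B p₃) (-1) 1 T t) *
          wMap φ p₃ (A p₃) (B p₃) (-1) 1 t) = 0 :=
  legendre_third_generation_orthogonal_general φ hφ hmono T k A B hAB p₁ p₂ p₃ hp₁ hp₂ hp₃
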